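/- arXiv:1408.4421 — 5 statements merged into one kernel-verified Lean document; each statement's English description precedes it below -/
import Mathlib

section
/- Suppose f_1, …, f_m are real-rooted polynomials of degree n with positive leading coefficients that have a common interlacing. Let μ_1, …, μ_m ≥ 0 with ∑_j μ_j = 1. Then the polynomial ∑_j μ_j f_j is real-rooted, and for all k = 1, …, n, min_j λ_k(f_j) ≤ λ_k(∑_j μ_j f_j) ≤ max_j λ_k(f_j). -/
open Polynomial

/-- The `k`-th largest element (1-indexed) of a multiset of reals. -/
noncomputable def kthLargest (s : Multiset ℝ) (k : ℕ) : ℝ :=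
  (s.sort (· ≤ ·)).getD (Multiset.card s - k) 0

/-- A real polynomial is real-rooted if it splits over `ℝ`
(equivalently, all of its complex roots are real). -/
def RealRooted (p : Polynomial ℝ) : Prop := p.Splits

/-- `rootK f k` is the `k`-th largest real root of `f`, counted with
multiplicity (1-indexed). -/
noncomputable def rootK (f : Polynomial ℝ) (k : ℕ) : ℝ :=
  kthLargest f.roots k

/-- `g` interlaces `f`: both are real-rooted, `deg g = deg f - 1`, and the
roots alternate: `α_{k+1} ≤ β_k ≤ α_k` for all `k`, where `α` are the roots
of `f` and `β` those of `g`, in decreasing order. -/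
def Interlaces (g f : Polynomial ℝ) : Prop :=
  RealRooted f ∧ RealRooted g ∧ g.natDegree + 1 = f.natDegree ∧
  ∀ k, 1 ≤ k → k ≤ g.natDegree →
    rootK f (k + 1) ≤ rootK g k ∧ rootK g k ≤ rootK f k

/-!
Write `F = ∑ μⱼ fⱼ` and `β₁ ≥ ⋯ ≥ β_{n-1}` for the roots of `g`. Root positions are handled
through counts: `x ≤ λ_k(p)` iff `p` has at least `k` roots in `[x, ∞)`, and interlacing says
that on every upper ray `f` has as many roots as `g` or one more. A real-rooted polynomial with
positive leading coefficient and `c` roots in `(x, ∞)` has the sign `(-1)^c` at `x`; hence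
`(-1)^k fⱼ(β_k) ≥ 0` for all `j`, and so `(-1)^k F(β_k) ≥ 0`.

If all these inequalities are strict, `F` changes sign between consecutive `β`'s (and above
`β₁`), which by the intermediate value theorem and a degree count makes `F` real-rooted and
interlaced by `g`; comparing the sign of `F` at a point `x` with the signs of the `fⱼ` there then
bounds the root counts of `F` on `[x, ∞)` and `(x, ∞)` by those of the `fⱼ`. Otherwise
`F(β) = 0` at a root `β` of `g`, so every `fⱼ` with `μⱼ > 0` vanishes at `β`, and we divide
`fⱼ`, `g` and `F` by `X - β` and induct on the degree.
-/

theorem List.SortedLE.apply_getElem_iff_le_countP {α : Type*} [Preorder α] {l : List α}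
    (hl : l.SortedLE) {P : α → Prop} [DecidablePred P] (hP : Monotone P) {i : ℕ}
    (hi : i < l.length) : P l[i] ↔ l.length - i ≤ l.countP P := by
  constructor
  · intro h
    have hdrop : (l.drop i).countP P = (l.drop i).length :=
      List.countP_eq_length.2 fun a ha => by
        obtain ⟨j, hj, rfl⟩ := List.mem_drop_iff_getElem.1 ha
        exact decide_eq_true (hP (hl.getElem_le_getElem_of_le (by omega)) h)
    calc l.length - i = (l.drop i).countP P := by rw [hdrop, List.length_drop]
      _ ≤ l.countP P := (List.drop_sublist i l).countP_le
  · intro h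
    by_contra hPi
    have htake : (l.take (i + 1)).countP P = 0 :=
      List.countP_eq_zero.2 fun a ha hPa => by
        obtain ⟨j, hj, rfl⟩ := List.mem_take_iff_getElem.1 ha
        exact hPi (hP (hl.getElem_le_getElem_of_le (by omega)) (of_decide_eq_true hPa))
    have hdrop := List.countP_le_length (p := fun a => decide (P a)) (l := l.drop (i + 1))
    rw [← List.take_append_drop (i + 1) l, List.countP_append, htake] at h
    simp only [List.length_append, List.length_take, List.length_drop] at h hdrop
    omega

section KthLargest

variable {s : Multiset ℝ} {k : ℕ}

theorem apply_kthLargest_iff_le_countP {P : ℝ → Prop} [DecidablePred P] (hP : Monotone P)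
    (hk : 1 ≤ k) (hks : k ≤ s.card) : P (kthLargest s k) ↔ k ≤ s.countP P := by
  have hlen : (s.sort (· ≤ ·)).length = s.card := Multiset.length_sort _
  rw [kthLargest, List.getD_eq_getElem _ _ (by omega),
    (Multiset.pairwise_sort s _).sortedLE.apply_getElem_iff_le_countP hP (by omega), hlen,
    ← Multiset.coe_countP, Multiset.sort_eq]
  omega

theorem le_kthLargest_iff (hk : 1 ≤ k) (hks : k ≤ s.card) {x : ℝ} :
    x ≤ kthLargest s k ↔ k ≤ s.countP (x ≤ ·) :=
  apply_kthLargest_iff_le_countP monotone_le hk hks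

theorem kthLargest_le_iff (hk : 1 ≤ k) (hks : k ≤ s.card) {x : ℝ} :
    kthLargest s k ≤ x ↔ s.countP (x < ·) < k := by
  rw [← not_lt, apply_kthLargest_iff_le_countP monotone_lt hk hks, not_le]

theorem kthLargest_mem (hk : 1 ≤ k) (hks : k ≤ s.card) : kthLargest s k ∈ s := by
  have hlen : (s.sort (· ≤ ·)).length = s.card := Multiset.length_sort _
  rw [kthLargest, List.getD_eq_getElem _ _ (by omega), ← Multiset.mem_sort (· ≤ ·)]
  exact List.getElem_mem _

theorem kthLargest_succ_le (hk : 1 ≤ k) (hks : k + 1 ≤ s.card) :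
    kthLargest s (k + 1) ≤ kthLargest s k := by
  have := (le_kthLargest_iff (by omega) hks).1 le_rfl
  exact (le_kthLargest_iff hk (by omega)).2 (by omega)

end KthLargest

namespace Multiset

theorem countP_le_eq_countP_lt_add_count (s : Multiset ℝ) (x : ℝ) :
    s.countP (x ≤ ·) = s.countP (x < ·) + s.count x := by
  induction s using Multiset.induction_on with
  | empty => simp
  | cons a s ih =>
    rw [countP_cons, countP_cons, count_cons, ih]
    rcases lt_trichotomy x a with h | rfl | h
    · simp [h.le, h, h.ne]
      omega
    · simp
      omega
    · simp [not_le.2 h, not_lt.2 h.le, h.ne']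

theorem countP_lt_le_countP_lt_of_le (s : Multiset ℝ) {x y : ℝ} (hxy : x ≤ y) :
    s.countP (y < ·) ≤ s.countP (x < ·) := by
  simp only [countP_eq_card_filter]
  exact card_le_card (monotone_filter_right s fun _ h => hxy.trans_lt h)

theorem neg_one_pow_countP_mul_prod_pos {s : Multiset ℝ} {z : ℝ} (hz : z ∉ s) :
    0 < (-1 : ℝ) ^ s.countP (z < ·) * (s.map (z - ·)).prod := by
  induction s using Multiset.induction_on with
  | empty => simp
  | cons a s ih =>
    rw [mem_cons, not_or] at hz
    have hpos := ih hz.2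
    rw [countP_cons, map_cons, prod_cons]
    split_ifs with h
    · calc (0 : ℝ) < (a - z) * ((-1) ^ s.countP (z < ·) * (s.map (z - ·)).prod) :=
            mul_pos (sub_pos.2 h) hpos
        _ = _ := by ring
    · have hza : 0 < z - a := sub_pos.2 (lt_of_le_of_ne (not_lt.1 h) (Ne.symm hz.1))
      calc (0 : ℝ) < (z - a) * ((-1) ^ s.countP (z < ·) * (s.map (z - ·)).prod) :=
            mul_pos hza hpos
        _ = _ := by ring

end Multiset

def CountInterlace (t s : Multiset ℝ) : Prop :=
  ∀ (P : ℝ → Prop) [DecidablePred P], Monotone P →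
    t.countP P ≤ s.countP P ∧ s.countP P ≤ t.countP P + 1

theorem countInterlace_of_kthLargest {s t : Multiset ℝ} (hcard : t.card + 1 = s.card)
    (h : ∀ k, 1 ≤ k → k ≤ t.card →
      kthLargest s (k + 1) ≤ kthLargest t k ∧ kthLargest t k ≤ kthLargest s k) :
    CountInterlace t s := by
  intro P _ hP
  constructor
  · set c := t.countP P
    rcases Nat.eq_zero_or_pos c with hc | hc
    · omega
    have hct : c ≤ t.card := Multiset.countP_le_card _ _
    have hPt : P (kthLargest t c) := (apply_kthLargest_iff_le_countP hP hc hct).2 le_rfl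
    exact (apply_kthLargest_iff_le_countP hP hc (by omega)).1 (hP (h c hc hct).2 hPt)
  · set c := s.countP P
    rcases lt_or_ge c 2 with hc | hc
    · omega
    have hcs : c ≤ s.card := Multiset.countP_le_card _ _
    have hPs : P (kthLargest s c) := (apply_kthLargest_iff_le_countP hP (by omega) hcs).2 le_rfl
    have hst := (h (c - 1) (by omega) (by omega)).1
    rw [Nat.sub_add_cancel (by omega)] at hst
    have := (apply_kthLargest_iff_le_countP hP (by omega) (by omega)).1 (hP hst hPs)
    omega

theorem Interlaces.countInterlace {f g : ℝ[X]} (h : Interlaces g f) :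
    CountInterlace g.roots f.roots := by
  obtain ⟨hf, hg, hdeg, hroots⟩ := h
  rw [← splits_iff_card_roots.1 hf, ← splits_iff_card_roots.1 hg] at hdeg
  exact countInterlace_of_kthLargest hdeg fun k hk hkg =>
    hroots k hk (by rwa [← splits_iff_card_roots.1 hg])

theorem CountInterlace.of_cons {s t : Multiset ℝ} {a : ℝ}
    (h : CountInterlace (a ::ₘ t) (a ::ₘ s)) : CountInterlace t s := by
  intro P _ hP
  have := h P hP
  simp only [Multiset.countP_cons] at this
  omega

namespace Polynomial

theorem roots_X_sub_C_mul {R : Type*} [CommRing R] [IsDomain R] {q : R[X]} (hq : q ≠ 0)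
    (a : R) : ((X - C a) * q).roots = a ::ₘ q.roots := by
  rw [roots_mul (mul_ne_zero (X_sub_C_ne_zero a) hq), roots_X_sub_C, Multiset.singleton_add]

theorem natDegree_X_sub_C_mul {R : Type*} [CommRing R] [IsDomain R] {q : R[X]} (hq : q ≠ 0)
    (a : R) : ((X - C a) * q).natDegree = q.natDegree + 1 := by
  rw [natDegree_mul (X_sub_C_ne_zero a) hq, natDegree_X_sub_C, add_comm]

theorem splits_of_natDegree_le_card_roots_add_one {K : Type*} [Field K] {p : K[X]}
    (h : p.natDegree ≤ p.roots.card + 1) : p.Splits := by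
  obtain ⟨q, hq⟩ := p.prod_multiset_X_sub_C_dvd
  by_cases hp : p = 0
  · simp [hp]
  have hq0 : q ≠ 0 := by rintro rfl; simp [hp] at hq
  have hdeg := congrArg natDegree hq
  have hmonic := monic_multiset_prod_of_monic p.roots _ fun a _ => monic_X_sub_C a
  rw [natDegree_mul hmonic.ne_zero hq0, natDegree_multiset_prod_X_sub_C_eq_card] at hdeg
  rw [hq]
  refine (Splits.multisetProd fun _ hx => ?_).mul (Splits.of_natDegree_le_one (by omega))
  obtain ⟨a, -, rfl⟩ := Multiset.mem_map.1 hx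
  exact Splits.X_sub_C a

theorem notMem_roots_of_mul_eval_pos {p : ℝ[X]} {c z : ℝ} (h : 0 < c * p.eval z) :
    z ∉ p.roots :=
  fun hz => h.ne' (by rw [(isRoot_of_mem_roots hz).eq_zero, mul_zero])

namespace Splits

variable {p : ℝ[X]} {z : ℝ}

theorem neg_one_pow_countP_mul_eval_pos (hp : p.Splits) (hl : 0 < p.leadingCoeff)
    (hz : z ∉ p.roots) : 0 < (-1 : ℝ) ^ p.roots.countP (z < ·) * p.eval z := by
  rw [hp.eval_eq_prod_roots, mul_left_comm]
  exact mul_pos hl (Multiset.neg_one_pow_countP_mul_prod_pos hz)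

theorem neg_one_pow_mul_eval_nonneg (hp : p.Splits) (hl : 0 < p.leadingCoeff) {k : ℕ}
    (hk₁ : p.roots.countP (z < ·) ≤ k) (hk₂ : k ≤ p.roots.countP (z ≤ ·)) :
    0 ≤ (-1 : ℝ) ^ k * p.eval z := by
  by_cases hz : z ∈ p.roots
  · rw [(isRoot_of_mem_roots hz).eq_zero, mul_zero]
  · rw [Multiset.countP_le_eq_countP_lt_add_count, Multiset.count_eq_zero.2 hz] at hk₂
    rw [show k = p.roots.countP (z < ·) by omega]
    exact (hp.neg_one_pow_countP_mul_eval_pos hl hz).le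

end Splits

theorem countP_roots_lt_of_sign_change {p : ℝ[X]} (hp : p ≠ 0) {a b : ℝ} (hab : a ≤ b) {k : ℕ}
    (ha : 0 < (-1 : ℝ) ^ (k + 1) * p.eval a) (hb : 0 < (-1 : ℝ) ^ k * p.eval b) :
    p.roots.countP (b < ·) < p.roots.countP (a < ·) := by
  have hcont := p.continuous.continuousOn (s := Set.Icc a b)
  obtain ⟨r, ⟨har, hrb⟩, hr⟩ : ∃ r ∈ Set.Ioo a b, p.eval r = 0 := by
    rw [pow_succ] at ha
    rcases neg_one_pow_eq_or ℝ k with h | h <;> rw [h] at ha hb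
    · exact intermediate_value_Ioo hab hcont ⟨by linarith, by linarith⟩
    · exact intermediate_value_Ioo' hab hcont ⟨by linarith, by linarith⟩
  rw [← Multiset.cons_erase ((mem_roots hp).2 hr), Multiset.countP_cons, Multiset.countP_cons,
    if_neg (not_lt.2 hrb.le), if_pos har]
  have := (p.roots.erase r).countP_lt_le_countP_lt_of_le hab
  omega

theorem le_countP_roots_of_alternating {p : ℝ[X]} (hp : p ≠ 0) {b : ℕ → ℝ} {N : ℕ}
    (hanti : ∀ i < N, b (i + 1) ≤ b i) (hsign : ∀ i ≤ N, 0 < (-1 : ℝ) ^ i * p.eval (b i))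
    {i j : ℕ} (hij : i ≤ j) (hj : j ≤ N) :
    p.roots.countP (b i < ·) + (j - i) ≤ p.roots.countP (b j < ·) := by
  induction j, hij using Nat.le_induction with
  | base => simp
  | succ j hij ih =>
    have := countP_roots_lt_of_sign_change hp (hanti j (by omega)) (hsign (j + 1) hj)
      (hsign j (by omega))
    have := ih (by omega)
    omega

/-- The intermediate value theorem gives at least `N` real roots, so the last one is real too,
and the sign of `p (b i)` fixes the parity of the number of roots above `b i`. -/
theorem splits_and_countP_roots_of_alternating {p : ℝ[X]} (hl : 0 < p.leadingCoeff) {N : ℕ}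
    (hdeg : p.natDegree = N + 1) {b : ℕ → ℝ} (hanti : ∀ i < N, b (i + 1) ≤ b i)
    (hsign : ∀ i ≤ N, 0 < (-1 : ℝ) ^ i * p.eval (b i)) :
    p.Splits ∧ ∀ i ≤ N, p.roots.countP (b i < ·) = i := by
  have hp : p ≠ 0 := leadingCoeff_ne_zero.1 hl.ne'
  have hcount {i j : ℕ} (hij : i ≤ j) (hj : j ≤ N) :=
    le_countP_roots_of_alternating hp hanti hsign hij hj
  have hcard_le := p.roots.countP_le_card (b N < ·)
  have hsplit : p.Splits := splits_of_natDegree_le_card_roots_add_one (by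
    have := hcount (Nat.zero_le N) le_rfl
    omega)
  have hcard : p.roots.card = N + 1 := (splits_iff_card_roots.1 hsplit).trans hdeg
  refine ⟨hsplit, fun i hi => ?_⟩
  have hlo := hcount (Nat.zero_le i) hi
  have hhi := hcount hi le_rfl
  have hpar := hsplit.neg_one_pow_countP_mul_eval_pos hl
    (notMem_roots_of_mul_eval_pos (hsign i hi))
  rcases (show p.roots.countP (b i < ·) = i ∨ p.roots.countP (b i < ·) = i + 1 by omega)
    with h | h
  · exact h
  · rw [h, pow_succ, mul_neg_one, neg_mul] at hpar
    linarith [hsign i hi]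

end Polynomial

open Filter in
theorem interlaces_of_alternating {p g : ℝ[X]} (hg : g.Splits)
    (hdeg : g.natDegree + 1 = p.natDegree) (hl : 0 < p.leadingCoeff)
    (hsign : ∀ k, 1 ≤ k → k ≤ g.natDegree → 0 < (-1 : ℝ) ^ k * p.eval (rootK g k)) :
    Interlaces g p := by
  set d := g.natDegree
  have hcard_g : g.roots.card = d := splits_iff_card_roots.1 hg
  obtain ⟨T, hT, hpT⟩ : ∃ T, rootK g 1 ≤ T ∧ 0 < p.eval T :=
    ((eventually_ge_atTop _).and ((p.tendsto_atTop_of_leadingCoeff_nonneg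
      (natDegree_pos_iff_degree_pos.1 (by omega)) hl.le).eventually_gt_atTop 0)).exists
  -- `T` stands for `β₀ = +∞`
  set b : ℕ → ℝ := fun k => if k = 0 then T else rootK g k
  have hb : ∀ k ≠ 0, b k = rootK g k := fun k hk => if_neg hk
  obtain ⟨hsplit, hcount⟩ := splits_and_countP_roots_of_alternating hl hdeg.symm (b := b)
    (by
      rintro (_ | i) hi
      · simpa [b] using hT
      · rw [hb _ (by omega), hb _ (by omega)]
        exact kthLargest_succ_le (by omega) (by omega))
    (by
      rintro (_ | i) hi
      · simpa [b] using hpT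
      · rw [hb _ (by omega)]
        exact hsign (i + 1) (by omega) hi)
  have hcard_p : p.roots.card = d + 1 := (splits_iff_card_roots.1 hsplit).trans hdeg.symm
  refine ⟨hsplit, hg, hdeg, fun k hk hkd => ⟨?_, ?_⟩⟩
  · have := hcount k hkd
    rw [hb k (by omega)] at this
    exact (kthLargest_le_iff (by omega) (by omega)).2 (by omega)
  · refine (le_kthLargest_iff hk (by omega)).2 ?_
    have := hcount k hkd
    rw [hb k (by omega)] at this
    rw [Multiset.countP_le_eq_countP_lt_add_count,
      Multiset.count_eq_zero.2 (notMem_roots_of_mul_eval_pos (hsign k hk hkd)), this, add_zero]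

section Family

variable {ι : Type*} {s : Finset ι} {μ : ι → ℝ} {f : ι → ℝ[X]}

theorem neg_one_pow_mul_eval_sum_smul (k : ℕ) (z : ℝ) :
    (-1 : ℝ) ^ k * (∑ j ∈ s, μ j • f j).eval z = ∑ j ∈ s, μ j * ((-1) ^ k * (f j).eval z) := by
  rw [eval_finsetSum, Finset.mul_sum]
  exact Finset.sum_congr rfl fun j _ => by rw [eval_smul, smul_eq_mul]; ring

theorem neg_one_pow_mul_eval_sum_smul_nonneg (hμ : ∀ j ∈ s, 0 ≤ μ j) {k : ℕ} {z : ℝ}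
    (hf : ∀ j ∈ s, 0 ≤ (-1 : ℝ) ^ k * (f j).eval z) :
    0 ≤ (-1 : ℝ) ^ k * (∑ j ∈ s, μ j • f j).eval z := by
  rw [neg_one_pow_mul_eval_sum_smul]
  exact Finset.sum_nonneg fun j hj => mul_nonneg (hμ j hj) (hf j hj)

theorem isRoot_of_eval_sum_smul_eq_zero (hμ : ∀ j ∈ s, 0 < μ j) {k : ℕ} {z : ℝ}
    (hf : ∀ j ∈ s, 0 ≤ (-1 : ℝ) ^ k * (f j).eval z) (hz : (∑ j ∈ s, μ j • f j).eval z = 0) :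
    ∀ j ∈ s, (f j).IsRoot z := by
  have hsum := neg_one_pow_mul_eval_sum_smul (μ := μ) (f := f) (s := s) k z
  rw [hz, mul_zero, eq_comm, Finset.sum_eq_zero_iff_of_nonneg
    fun j hj => mul_nonneg (hμ j hj).le (hf j hj)] at hsum
  intro j hj
  simpa [(hμ j hj).ne'] using hsum j hj

theorem natDegree_sum_smul_and_leadingCoeff_pos (hs : s.Nonempty) (hμ : ∀ j ∈ s, 0 < μ j)
    {n : ℕ} (hdeg : ∀ j ∈ s, (f j).natDegree = n) (hl : ∀ j ∈ s, 0 < (f j).leadingCoeff) :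
    (∑ j ∈ s, μ j • f j).natDegree = n ∧ 0 < (∑ j ∈ s, μ j • f j).leadingCoeff := by
  have hcoeff : 0 < (∑ j ∈ s, μ j • f j).coeff n := by
    rw [finsetSum_coeff]
    refine Finset.sum_pos (fun j hj => ?_) hs
    rw [coeff_smul, smul_eq_mul, ← hdeg j hj]
    exact mul_pos (hμ j hj) (hl j hj)
  have hle : (∑ j ∈ s, μ j • f j).natDegree ≤ n := natDegree_sum_le_of_forall_le _ _
    fun j hj => (natDegree_smul_le _ _).trans (hdeg j hj).le
  have hdegF := hle.antisymm (le_natDegree_of_ne_zero hcoeff.ne')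
  exact ⟨hdegF, by rwa [leadingCoeff, hdegF]⟩

/-- By `le_kthLargest_iff` and `kthLargest_le_iff`, this says
`minⱼ λ_k(r j) ≤ λ_k(R) ≤ maxⱼ λ_k(r j)` for every `k`. -/
def CountsBetween (s : Finset ι) (r : ι → Multiset ℝ) (R : Multiset ℝ) : Prop :=
  ∀ x k, ((∀ j ∈ s, k ≤ (r j).countP (x ≤ ·)) → k ≤ R.countP (x ≤ ·)) ∧
    ((∀ j ∈ s, (r j).countP (x < ·) ≤ k) → R.countP (x < ·) ≤ k)

theorem CountsBetween.cons (hs : s.Nonempty) {r r' : ι → Multiset ℝ} {R : Multiset ℝ}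
    (h : CountsBetween s r R) {a : ℝ} (hr : ∀ j ∈ s, r' j = a ::ₘ r j) :
    CountsBetween s r' (a ::ₘ R) := by
  obtain ⟨j₀, hj₀⟩ := hs
  intro x k
  simp only [Multiset.countP_cons]
  constructor
  · intro hk
    have hlow := (h x (k - if x ≤ a then 1 else 0)).1 fun j hj => by
      have := hk j hj
      rw [hr j hj, Multiset.countP_cons] at this
      omega
    omega
  · intro hk
    have h₀ := hk j₀ hj₀
    rw [hr j₀ hj₀, Multiset.countP_cons] at h₀
    have hup := (h x (k - if x < a then 1 else 0)).2 fun j hj => by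
      have := hk j hj
      rw [hr j hj, Multiset.countP_cons] at this
      omega
    omega

end Family

structure CommonInterlacing {ι : Type*} (s : Finset ι) (f : ι → ℝ[X]) (g : ℝ[X]) : Prop where
  splits : g.Splits
  splits_apply : ∀ j ∈ s, (f j).Splits
  natDegree_apply : ∀ j ∈ s, (f j).natDegree = g.natDegree + 1
  leadingCoeff_pos : ∀ j ∈ s, 0 < (f j).leadingCoeff
  countInterlace : ∀ j ∈ s, CountInterlace g.roots (f j).roots

namespace CommonInterlacing

variable {ι : Type*} {s : Finset ι} {μ : ι → ℝ} {f : ι → ℝ[X]} {g : ℝ[X]}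

theorem of_interlaces (hs : s.Nonempty) (hg : ∀ j ∈ s, Interlaces g (f j))
    (hl : ∀ j ∈ s, 0 < (f j).leadingCoeff) : CommonInterlacing s f g where
  splits := (hg _ hs.choose_spec).2.1
  splits_apply j hj := (hg j hj).1
  natDegree_apply j hj := (hg j hj).2.2.1.symm
  leadingCoeff_pos := hl
  countInterlace j hj := (hg j hj).countInterlace

theorem cancel_X_sub_C (hI : CommonInterlacing s f g) (hg0 : g ≠ 0) {a : ℝ} {g' : ℝ[X]}
    {q : ι → ℝ[X]} (hg : g = (X - C a) * g') (hf : ∀ j ∈ s, f j = (X - C a) * q j) :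
    CommonInterlacing s q g' := by
  have hg'0 : g' ≠ 0 := fun h0 => hg0 (by rw [hg, h0, mul_zero])
  have hf0 : ∀ j ∈ s, f j ≠ 0 := fun j hj => leadingCoeff_ne_zero.1 (hI.leadingCoeff_pos j hj).ne'
  have hq0 : ∀ j ∈ s, q j ≠ 0 := fun j hj h0 => hf0 j hj (by rw [hf j hj, h0, mul_zero])
  refine ⟨hI.splits.of_dvd hg0 (hg ▸ dvd_mul_left _ _),
    fun j hj => (hI.splits_apply j hj).of_dvd (hf0 j hj) (hf j hj ▸ dvd_mul_left _ _),
    fun j hj => ?_, fun j hj => ?_, fun j hj => ?_⟩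
  · have := hI.natDegree_apply j hj
    rw [hf j hj, hg, natDegree_X_sub_C_mul (hq0 j hj), natDegree_X_sub_C_mul hg'0] at this
    omega
  · have := hI.leadingCoeff_pos j hj
    rwa [hf j hj, leadingCoeff_mul, leadingCoeff_X_sub_C, one_mul] at this
  · have := hI.countInterlace j hj
    rw [hf j hj, hg, roots_X_sub_C_mul (hq0 j hj), roots_X_sub_C_mul hg'0] at this
    exact this.of_cons

theorem neg_one_pow_mul_eval_nonneg (hI : CommonInterlacing s f g) {z : ℝ} {k : ℕ}
    (hk₁ : g.roots.countP (z < ·) < k) (hk₂ : k ≤ g.roots.countP (z ≤ ·)) :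
    ∀ j ∈ s, 0 ≤ (-1 : ℝ) ^ k * (f j).eval z := fun j hj => by
  have hlt := hI.countInterlace j hj (z < ·) monotone_lt
  have hle := hI.countInterlace j hj (z ≤ ·) monotone_le
  exact (hI.splits_apply j hj).neg_one_pow_mul_eval_nonneg (hI.leadingCoeff_pos j hj)
    (by omega) (by omega)

theorem le_countP_roots_sum_smul (hI : CommonInterlacing s f g) (hμ : ∀ j ∈ s, 0 < μ j)
    (hF : Interlaces g (∑ j ∈ s, μ j • f j)) (hFl : 0 < (∑ j ∈ s, μ j • f j).leadingCoeff)
    {x : ℝ} (hx : x ∈ g.roots → (∑ j ∈ s, μ j • f j).eval x ≠ 0) {j₀ : ι} (hj₀ : j₀ ∈ s)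
    {k : ℕ} (hk : ∀ j ∈ s, k ≤ (f j).roots.countP (x ≤ ·)) :
    k ≤ (∑ j ∈ s, μ j • f j).roots.countP (x ≤ ·) := by
  set F := ∑ j ∈ s, μ j • f j
  by_contra! hlt
  have hgF_lt := hF.countInterlace (x < ·) monotone_lt
  have hgF_le := hF.countInterlace (x ≤ ·) monotone_le
  have hgf := hI.countInterlace j₀ hj₀ (x ≤ ·) monotone_le
  have hg_count := g.roots.countP_le_eq_countP_lt_add_count x
  have hF_count := F.roots.countP_le_eq_countP_lt_add_count x
  have h₀ := hk j₀ hj₀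
  have hxF : x ∉ F.roots := fun hxF => hx (by
    rw [← Multiset.count_pos] at hxF ⊢
    omega) (isRoot_of_mem_roots hxF)
  have hnonneg : 0 ≤ (-1 : ℝ) ^ k * F.eval x :=
    neg_one_pow_mul_eval_sum_smul_nonneg (fun j hj => (hμ j hj).le) fun j hj =>
      (hI.splits_apply j hj).neg_one_pow_mul_eval_nonneg (hI.leadingCoeff_pos j hj)
        (by have := hI.countInterlace j hj (x < ·) monotone_lt; omega) (hk j hj)
  have hpos := hF.1.neg_one_pow_countP_mul_eval_pos hFl hxF
  rw [Multiset.count_eq_zero.2 hxF] at hF_count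
  obtain rfl : k = F.roots.countP (x < ·) + 1 := by omega
  rw [pow_succ, mul_neg_one, neg_mul] at hnonneg
  linarith

theorem countP_roots_sum_smul_le (hI : CommonInterlacing s f g) (hμ : ∀ j ∈ s, 0 < μ j)
    (hF : Interlaces g (∑ j ∈ s, μ j • f j)) (hFl : 0 < (∑ j ∈ s, μ j • f j).leadingCoeff)
    {x : ℝ} (hx : x ∈ g.roots → (∑ j ∈ s, μ j • f j).eval x ≠ 0) {j₀ : ι} (hj₀ : j₀ ∈ s)
    {k : ℕ} (hk : ∀ j ∈ s, (f j).roots.countP (x < ·) ≤ k) :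
    (∑ j ∈ s, μ j • f j).roots.countP (x < ·) ≤ k := by
  set F := ∑ j ∈ s, μ j • f j
  by_contra! hlt
  have hgF_lt := hF.countInterlace (x < ·) monotone_lt
  have hgF_le := hF.countInterlace (x ≤ ·) monotone_le
  have hgf := hI.countInterlace j₀ hj₀ (x < ·) monotone_lt
  have hg_count := g.roots.countP_le_eq_countP_lt_add_count x
  have hF_count := F.roots.countP_le_eq_countP_lt_add_count x
  have h₀ := hk j₀ hj₀
  have hxF : x ∉ F.roots := fun hxF => hx (by
    rw [← Multiset.count_pos] at hxF ⊢
    omega) (isRoot_of_mem_roots hxF)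
  have hnonneg : 0 ≤ (-1 : ℝ) ^ k * F.eval x :=
    neg_one_pow_mul_eval_sum_smul_nonneg (fun j hj => (hμ j hj).le) fun j hj =>
      (hI.splits_apply j hj).neg_one_pow_mul_eval_nonneg (hI.leadingCoeff_pos j hj) (hk j hj)
        (by have := hI.countInterlace j hj (x ≤ ·) monotone_le; omega)
  have hpos := hF.1.neg_one_pow_countP_mul_eval_pos hFl hxF
  rw [show F.roots.countP (x < ·) = k + 1 by omega, pow_succ, mul_neg_one, neg_mul] at hpos
  linarith

theorem interlaces_sum_smul (hI : CommonInterlacing s f g) (hs : s.Nonempty)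
    (hμ : ∀ j ∈ s, 0 < μ j) (hne : ∀ β ∈ g.roots, (∑ j ∈ s, μ j • f j).eval β ≠ 0) :
    Interlaces g (∑ j ∈ s, μ j • f j) := by
  obtain ⟨hFdeg, hFl⟩ :=
    natDegree_sum_smul_and_leadingCoeff_pos hs hμ hI.natDegree_apply hI.leadingCoeff_pos
  have hcard := splits_iff_card_roots.1 hI.splits
  refine interlaces_of_alternating hI.splits hFdeg.symm hFl fun k hk hkd => ?_
  refine lt_of_le_of_ne (neg_one_pow_mul_eval_sum_smul_nonneg (fun j hj => (hμ j hj).le)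
    (hI.neg_one_pow_mul_eval_nonneg ((kthLargest_le_iff hk (by omega)).1 le_rfl)
      ((le_kthLargest_iff hk (by omega)).1 le_rfl))) ?_
  exact (mul_ne_zero (pow_ne_zero _ (by norm_num)) (hne _ (kthLargest_mem hk (by omega)))).symm

theorem isRoot_of_eval_sum_smul_eq_zero (hI : CommonInterlacing s f g) (hμ : ∀ j ∈ s, 0 < μ j)
    {β : ℝ} (hβ : β ∈ g.roots) (hFβ : (∑ j ∈ s, μ j • f j).eval β = 0) :
    ∀ j ∈ s, (f j).IsRoot β := by
  refine _root_.isRoot_of_eval_sum_smul_eq_zero hμ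
    (hI.neg_one_pow_mul_eval_nonneg (Nat.lt_succ_self _) ?_) hFβ
  rw [Multiset.countP_le_eq_countP_lt_add_count]
  have := Multiset.count_pos.2 hβ
  omega

theorem splits_sum_smul_and_countsBetween (hI : CommonInterlacing s f g) (hs : s.Nonempty)
    (hμ : ∀ j ∈ s, 0 < μ j) :
    (∑ j ∈ s, μ j • f j).Splits ∧
      CountsBetween s (fun j => (f j).roots) (∑ j ∈ s, μ j • f j).roots := by
  induction hd : g.natDegree using Nat.strong_induction_on generalizing f g with
  | _ d ih =>
  set F := ∑ j ∈ s, μ j • f j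
  have hFl : 0 < F.leadingCoeff :=
    (natDegree_sum_smul_and_leadingCoeff_pos hs hμ hI.natDegree_apply hI.leadingCoeff_pos).2
  by_cases hne : ∀ β ∈ g.roots, F.eval β ≠ 0
  · have hFg := hI.interlaces_sum_smul hs hμ hne
    exact ⟨hFg.1, fun x k => ⟨hI.le_countP_roots_sum_smul hμ hFg hFl (hne x) hs.choose_spec,
      hI.countP_roots_sum_smul_le hμ hFg hFl (hne x) hs.choose_spec⟩⟩
  obtain ⟨β, hβ, hFβ⟩ : ∃ β ∈ g.roots, F.eval β = 0 := by
    push Not at hne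
    exact hne
  set q := fun j => f j /ₘ (X - C β)
  set g' := g /ₘ (X - C β)
  have hq : ∀ j ∈ s, f j = (X - C β) * q j := fun j hj =>
    (mul_divByMonic_eq_iff_isRoot.2 (hI.isRoot_of_eval_sum_smul_eq_zero hμ hβ hFβ j hj)).symm
  have hg' : g = (X - C β) * g' := (mul_divByMonic_eq_iff_isRoot.2 (isRoot_of_mem_roots hβ)).symm
  have hg0 : g ≠ 0 := ne_zero_of_mem_roots hβ
  have hg'0 : g' ≠ 0 := fun h0 => hg0 (by rw [hg', h0, mul_zero])
  have hI' := hI.cancel_X_sub_C hg0 hg' hq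
  obtain ⟨hsplit, hbetween⟩ :=
    ih g'.natDegree (by rw [← hd, hg', natDegree_X_sub_C_mul hg'0]; omega) hI' rfl
  have hFq : F = (X - C β) * ∑ j ∈ s, μ j • q j := by
    rw [Finset.mul_sum]
    exact Finset.sum_congr rfl fun j hj => by rw [mul_smul_comm, ← hq j hj]
  have hF0 : F ≠ 0 := leadingCoeff_ne_zero.1 hFl.ne'
  have hH0 : ∑ j ∈ s, μ j • q j ≠ 0 := fun h0 => hF0 (by rw [hFq, h0, mul_zero])
  refine ⟨hFq ▸ (Splits.X_sub_C β).mul hsplit, ?_⟩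
  rw [hFq, roots_X_sub_C_mul hH0]
  exact hbetween.cons hs fun j hj => by
    rw [hq j hj, roots_X_sub_C_mul (leadingCoeff_ne_zero.1 (hI'.leadingCoeff_pos j hj).ne')]

end CommonInterlacing

theorem interlacing_family_average_general
    {m n : ℕ} (f : Fin m → Polynomial ℝ)
    (hdeg : ∀ j, (f j).natDegree = n)
    (hlead : ∀ j, 0 < (f j).leadingCoeff)
    (g : Polynomial ℝ) (hg : ∀ j, Interlaces g (f j))
    (μ : Fin m → ℝ) (hμ0 : ∀ j, 0 ≤ μ j) (hμ1 : ∑ j, μ j = 1) :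
    RealRooted (∑ j, μ j • f j) ∧
    ∀ k, 1 ≤ k → k ≤ n →
      (∃ j, rootK (f j) k ≤ rootK (∑ j', μ j' • f j') k) ∧
      (∃ j, rootK (∑ j', μ j' • f j') k ≤ rootK (f j) k) := by
  set s := Finset.univ.filter fun j => 0 < μ j
  have hμ : ∀ j ∈ s, 0 < μ j := fun j hj => (Finset.mem_filter.1 hj).2
  have hpos : ∀ j, μ j ≠ 0 → 0 < μ j := fun j h => (hμ0 j).lt_of_ne' h
  have hs : s.Nonempty := Finset.nonempty_of_sum_ne_zero (f := μ) (by
    rw [Finset.sum_filter_of_ne fun j _ => hpos j, hμ1]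
    norm_num)
  have hsum : ∑ j, μ j • f j = ∑ j ∈ s, μ j • f j :=
    (Finset.sum_filter_of_ne fun j _ h => hpos j (left_ne_zero_of_smul h)).symm
  have hI := CommonInterlacing.of_interlaces hs (fun j _ => hg j) (fun j _ => hlead j)
  obtain ⟨hsplit, hbetween⟩ := hI.splits_sum_smul_and_countsBetween hs hμ
  have hcard : (∑ j ∈ s, μ j • f j).roots.card = n := by
    rw [splits_iff_card_roots.1 hsplit,
      (natDegree_sum_smul_and_leadingCoeff_pos hs hμ (fun j _ => hdeg j) (fun j _ => hlead j)).1]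
  have hcard_f : ∀ j, (f j).roots.card = n := fun j => by
    rw [splits_iff_card_roots.1 (hg j).1, hdeg j]
  have huniv : (Finset.univ : Finset (Fin m)).Nonempty := ⟨_, Finset.mem_univ hs.choose⟩
  rw [hsum]
  refine ⟨hsplit, fun k hk hkn => ⟨?_, ?_⟩⟩
  · obtain ⟨j₀, -, hj₀⟩ := Finset.univ.exists_min_image (fun j => rootK (f j) k) huniv
    refine ⟨j₀, (le_kthLargest_iff hk (by omega)).2 ((hbetween (rootK (f j₀) k) k).1 fun j _ => ?_)⟩
    exact (le_kthLargest_iff hk (by rw [hcard_f]; omega)).1 (hj₀ j (Finset.mem_univ j))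
  · obtain ⟨j₀, -, hj₀⟩ := Finset.univ.exists_max_image (fun j => rootK (f j) k) huniv
    refine ⟨j₀, (kthLargest_le_iff hk (by omega)).2 (Nat.lt_of_le_pred hk
      ((hbetween (rootK (f j₀) k) (k - 1)).2 fun j _ => Nat.le_pred_of_lt ?_))⟩
    exact (kthLargest_le_iff hk (by rw [hcard_f]; omega)).1 (hj₀ j (Finset.mem_univ j))

/-- **Averages of polynomials with a common interlacing.**
If `f₁, …, f_m` are real-rooted of degree `n` with positive leading
coefficients and have a common interlacing `g`, then every convex combination
`∑ μⱼ fⱼ` is real-rooted, and its `k`-th largest root lies between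
`minⱼ λ_k(fⱼ)` and `maxⱼ λ_k(fⱼ)`. -/
theorem interlacing_family_average
    {m n : ℕ} (hm : 0 < m) (f : Fin m → Polynomial ℝ)
    (hdeg : ∀ j, (f j).natDegree = n)
    (hlead : ∀ j, 0 < (f j).leadingCoeff)
    (hrr : ∀ j, RealRooted (f j))
    (g : Polynomial ℝ) (hg : ∀ j, Interlaces g (f j))
    (μ : Fin m → ℝ) (hμ0 : ∀ j, 0 ≤ μ j) (hμ1 : ∑ j, μ j = 1) :
    RealRooted (∑ j, μ j • f j) ∧
    ∀ k, 1 ≤ k → k ≤ n →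
      (∃ j, rootK (f j) k ≤ rootK (∑ j', μ j' • f j') k) ∧
      (∃ j, rootK (∑ j', μ j' • f j') k ≤ rootK (f j) k) :=
  interlacing_family_average_general f hdeg hlead g hg μ hμ0 hμ1
end

section
/- Let A be a Hermitian n×n matrix, let w_1, …, w_m ∈ ℂ^n with probabilities p_1, …, p_m > 0, ∑_i p_i = 1, and suppose ∑_i p_i w_i w_i* = cI for some constant c ≥ 0. Then ∑_{i=1}^m p_i · det(xI − A − w_i w_i*) = (1 − cD) χ[A](x), where χ[A](x) = det(xI − A). -/
open Polynomial Matrix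

/-- The rank-one outer product `v v*`. -/
noncomputable def outer {n : ℕ} (v : Fin n → ℂ) : Matrix (Fin n) (Fin n) ℂ :=
  Matrix.vecMulVec v (star v)

/-!
Away from the finitely many eigenvalues of `A`, put `M = xI - A`. The matrix determinant lemma
gives `det (M - w w*) = det M · (1 - w* M⁻¹ w)` and `w* M⁻¹ w = tr (M⁻¹ w w*)`, so averaging
against `p` and using `∑ pᵢ wᵢ wᵢ* = c I` yields `det M · (1 - c · tr M⁻¹)`. By Jacobi's formula
`χ[A]'(x) = det M · tr M⁻¹`, so both sides agree at infinitely many points.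
-/

namespace Matrix

variable {R : Type*} [CommRing R] {n : Type*} [Fintype n] [DecidableEq n]

theorem taylor_charpoly (A : Matrix n n R) (x : R) :
    taylor x A.charpoly = det ((X : R[X]) • (1 : Matrix n n R[X]) + (scalar n x - A).map C) := by
  rw [taylor_apply, comp_eq_aeval, charpoly, AlgHom.map_det]
  congr 1
  ext i j
  obtain rfl | hij := eq_or_ne i j <;> simp [*]
  ring

theorem eval_derivative_charpoly {A : Matrix n n R} {x : R} (hx : IsUnit (scalar n x - A).det) :
    A.charpoly.derivative.eval x = (scalar n x - A).det * trace (scalar n x - A)⁻¹ := by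
  set M := scalar n x - A
  -- Taylor-expand at `x`, pull out `det M`, and read off the linear coefficient of `det (1 + X M⁻¹)`.
  have hfactor : (X : R[X]) • (1 : Matrix n n R[X]) + M.map C
      = M.map C * (1 + (X : R[X]) • M⁻¹.map C) := by
    rw [Matrix.mul_add, Matrix.mul_one, Matrix.mul_smul, ← Matrix.map_mul,
      Matrix.mul_nonsing_inv _ hx, Matrix.map_one _ (map_zero C) (map_one C), add_comm]
  rw [← taylor_coeff_one, taylor_charpoly, hfactor, det_mul,
    show (M.map C).det = C M.det from (RingHom.map_det C M).symm, coeff_C_mul,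
    coeff_det_one_add_X_smul_one]

theorem det_sub_vecMulVec {M : Matrix n n R} (hM : IsUnit M.det) (u v : n → R) :
    (M - vecMulVec u v).det = M.det * (1 - v ⬝ᵥ M⁻¹ *ᵥ u) := by
  rw [sub_eq_add_neg, ← neg_vecMulVec, vecMulVec_eq Unit, det_add_replicateCol_mul_replicateRow hM,
    det_unique (n := Unit), Matrix.mul_assoc, ← replicateCol_mulVec]
  simp [replicateRow_mul_replicateCol_apply, mulVec_neg, sub_eq_add_neg]

theorem sum_mul_det_sub_vecMulVec {ι : Type*} [Fintype ι] {M : Matrix n n R} (hM : IsUnit M.det)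
    (p : ι → R) (u v : ι → n → R) (c : R) (hp : ∑ i, p i = 1)
    (hcov : ∑ i, p i • vecMulVec (u i) (v i) = c • 1) :
    ∑ i, p i * (M - vecMulVec (u i) (v i)).det = M.det * (1 - c * trace M⁻¹) := by
  have htrace : ∑ i, p i * (v i ⬝ᵥ M⁻¹ *ᵥ u i) = c * trace M⁻¹ :=
    calc ∑ i, p i * (v i ⬝ᵥ M⁻¹ *ᵥ u i)
        = trace (M⁻¹ * ∑ i, p i • vecMulVec (u i) (v i)) := by
          simp only [Matrix.mul_sum, trace_sum, Matrix.mul_smul, trace_smul, smul_eq_mul,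
            mul_vecMulVec, trace_vecMulVec, dotProduct_comm]
      _ = c * trace M⁻¹ := by rw [hcov, Matrix.mul_smul, Matrix.mul_one, trace_smul, smul_eq_mul]
  calc ∑ i, p i * (M - vecMulVec (u i) (v i)).det
      = M.det * (∑ i, p i - ∑ i, p i * (v i ⬝ᵥ M⁻¹ *ᵥ u i)) := by
        rw [mul_sub, Finset.mul_sum, Finset.mul_sum, ← Finset.sum_sub_distrib]
        exact Finset.sum_congr rfl fun i _ => by rw [det_sub_vecMulVec hM]; ring
    _ = M.det * (1 - c * trace M⁻¹) := by rw [hp, htrace]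

theorem sum_smul_charpoly_add_vecMulVec {K : Type*} [Field K] [Infinite K] {ι : Type*} [Fintype ι]
    (A : Matrix n n K) (p : ι → K) (u v : ι → n → K) (c : K) (hp : ∑ i, p i = 1)
    (hcov : ∑ i, p i • vecMulVec (u i) (v i) = c • 1) :
    ∑ i, p i • (A + vecMulVec (u i) (v i)).charpoly = A.charpoly - c • A.charpoly.derivative := by
  refine eq_of_infinite_eval_eq _ _ <|
    (finite_setOfPred_isRoot A.charpoly_monic.ne_zero).infinite_compl.mono fun x hx => ?_
  have hM : IsUnit (scalar n x - A).det := by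
    rw [← eval_charpoly]
    exact isUnit_iff_ne_zero.mpr hx
  simp_rw [Set.mem_ofPred_eq, eval_finsetSum, eval_sub, eval_smul, smul_eq_mul, eval_charpoly,
    eval_derivative_charpoly hM, ← sub_sub, sum_mul_det_sub_vecMulVec hM p u v c hp hcov]
  ring

end Matrix

theorem expected_rank_one_update_eq_oneSubD_general
    {n m : ℕ} (A : Matrix (Fin n) (Fin n) ℂ)
    (w : Fin m → (Fin n → ℂ)) (p : Fin m → ℝ)
    (hp1 : ∑ i, p i = 1)
    (c : ℝ)
    (hcov : ∑ i, p i • outer (w i) = c • (1 : Matrix (Fin n) (Fin n) ℂ)) :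
    ∑ i, ((p i : ℂ)) • (A + outer (w i)).charpoly
      = A.charpoly - (c : ℂ) • Polynomial.derivative A.charpoly := by
  refine sum_smul_charpoly_add_vecMulVec A (fun i => p i) w (fun i => star (w i)) c
    (by exact_mod_cast hp1) ?_
  simpa only [Complex.coe_smul, outer] using hcov

/-- **Isotropic rank-one updates correspond to `(1 - cD)` operators.**
If a random vector takes value `w i` with probability `p i > 0`,
`∑ᵢ pᵢ = 1`, and `E[v v*] = ∑ᵢ pᵢ wᵢ wᵢ* = c I` for some `c ≥ 0`, then for
any Hermitian `A`,
`E χ[A + v v*](x) = ∑ᵢ pᵢ det(xI - A - wᵢ wᵢ*) = (1 - cD) χ[A](x)`. -/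
theorem expected_rank_one_update_eq_oneSubD
    {n m : ℕ} (A : Matrix (Fin n) (Fin n) ℂ) (hA : A.IsHermitian)
    (w : Fin m → (Fin n → ℂ)) (p : Fin m → ℝ)
    (hp : ∀ i, 0 < p i) (hp1 : ∑ i, p i = 1)
    (c : ℝ) (hc : 0 ≤ c)
    (hcov : ∑ i, p i • outer (w i) = c • (1 : Matrix (Fin n) (Fin n) ℂ)) :
    ∑ i, ((p i : ℂ)) • (A + outer (w i)).charpoly
      = A.charpoly - (c : ℂ) • Polynomial.derivative A.charpoly :=
  expected_rank_one_update_eq_oneSubD_general A w p hp1 c hcov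
end

section
/- Let f be a real-rooted real polynomial, let 0 < φ < 1, and suppose b ∈ ℝ is strictly above all roots of f and satisfies Φ^f(b) = f′(b)/f(b) ≤ φ. Then the point b + 1/(1−φ) is strictly above all roots of (1−D)f = f − f′, and Φ^{(1−D)f}(b + 1/(1−φ)) ≤ φ. Consequently, smax_φ((1−D)f) ≤ smax_φ(f) + 1/(1−φ). -/
/-!
Above all roots of a real-rooted `f`, write `s₁ = ∑ 1/(x - λᵢ)` and `s₂ = ∑ 1/(x - λᵢ)²`. Then
`Φ^f = s₁` and `f''/f = s₁² - s₂`, so `(1 - D)f = f (1 - s₁)` and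
`Φ^{(1-D)f} = (s₁ - s₁² + s₂)/(1 - s₁)`. Convexity of `s₁` gives
`δ s₂(b + δ) ≤ s₁(b) - s₁(b + δ)`, and with `δ = 1/(1 - φ)` and `s₁(b) ≤ φ` this is exactly what
makes the quotient at most `φ`, strictly so beyond `b + δ`.

For `smax`: the intermediate value theorem gives a `t ≤ b` above the roots with `Φ^f(t) = φ`,
and as `s₁` decreases strictly above the roots, `t = smax_φ(f)`. Shifting from `t` bounds the
level set of `Φ^{(1-D)f}` by `t + δ`, and the intermediate value theorem on `[t, t + δ]` shows
that this level set is not empty.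
-/

open Polynomial

/-- The upper barrier function `Φ^f(b) = f'(b)/f(b)`. -/
noncomputable def upperBarrier (f : Polynomial ℝ) (b : ℝ) : ℝ :=
  (Polynomial.derivative f).eval b / f.eval b

/-- The soft spectral upper edge `smax_φ(f) = max {x : Φ^f(x) = φ}`. -/
noncomputable def smax (φ : ℝ) (f : Polynomial ℝ) : ℝ :=
  sSup {x : ℝ | upperBarrier f x = φ}

section RootSums

variable {K : Type*} [Field K]

noncomputable def invSubSum (R : Multiset K) (x : K) : K := (R.map fun z ↦ 1 / (x - z)).sum

noncomputable def invSubSqSum (R : Multiset K) (x : K) : K := (R.map fun z ↦ 1 / (x - z) ^ 2).sum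

theorem eval_derivative_multiset_prod_X_sub_C {R : Multiset K} {x : K} (hx : x ∉ R) :
    (derivative (R.map (X - C ·)).prod).eval x = (R.map (X - C ·)).prod.eval x * invSubSum R x := by
  induction R using Multiset.induction_on with
  | empty => simp [invSubSum]
  | cons a R ih =>
    have hxa : x - a ≠ 0 := sub_ne_zero.mpr fun h => hx (h ▸ Multiset.mem_cons_self a R)
    simp only [invSubSum, Multiset.map_cons, Multiset.prod_cons, Multiset.sum_cons, derivative_mul,
      derivative_sub, derivative_X, derivative_C, eval_add, eval_mul, eval_sub, eval_X, eval_C,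
      sub_zero, one_mul] at ih ⊢
    rw [ih fun h => hx (Multiset.mem_cons_of_mem h)]
    field_simp

theorem eval_derivative_derivative_multiset_prod_X_sub_C {R : Multiset K} {x : K} (hx : x ∉ R) :
    (derivative (derivative (R.map (X - C ·)).prod)).eval x =
      (R.map (X - C ·)).prod.eval x * (invSubSum R x ^ 2 - invSubSqSum R x) := by
  induction R using Multiset.induction_on with
  | empty => simp [invSubSum, invSubSqSum]
  | cons a R ih =>
    have hxa : x - a ≠ 0 := sub_ne_zero.mpr fun h => hx (h ▸ Multiset.mem_cons_self a R)
    have hxR : x ∉ R := fun h => hx (Multiset.mem_cons_of_mem h)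
    have hR' := eval_derivative_multiset_prod_X_sub_C hxR
    simp only [invSubSum, invSubSqSum, Multiset.map_cons, Multiset.prod_cons, Multiset.sum_cons,
      derivative_mul, derivative_add, derivative_sub, derivative_X, derivative_C, eval_add,
      eval_mul, eval_sub, eval_X, eval_C, sub_zero, one_mul] at ih hR' ⊢
    rw [ih hxR, hR']
    field_simp
    ring

theorem Polynomial.Splits.eval_derivative_derivative_eq_eval_mul {f : K[X]} (hf : f.Splits)
    {x : K} (hx : f.eval x ≠ 0) :
    (derivative (derivative f)).eval x =
      f.eval x * (invSubSum f.roots x ^ 2 - invSubSqSum f.roots x) := by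
  have hroots : x ∉ f.roots := fun h => hx (isRoot_of_mem_roots h)
  have hfac := hf.eq_prod_roots
  calc (derivative (derivative f)).eval x
      = f.leadingCoeff * (derivative (derivative (f.roots.map (X - C ·)).prod)).eval x := by
        rw [hfac, derivative_C_mul, derivative_C_mul, eval_C_mul, ← hfac]
    _ = f.eval x * (invSubSum f.roots x ^ 2 - invSubSqSum f.roots x) := by
        rw [eval_derivative_derivative_multiset_prod_X_sub_C hroots, ← mul_assoc, ← eval_C_mul,
          ← hfac]

end RootSums

section AboveRoots

variable {R : Multiset ℝ} {x y : ℝ}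

theorem invSubSum_le_invSubSum (hR : ∀ a ∈ R, a < x) (hxy : x ≤ y) :
    invSubSum R y ≤ invSubSum R x :=
  Multiset.sum_map_le_sum_map _ _ fun a ha => by
    have := hR a ha
    gcongr

theorem invSubSum_lt_invSubSum (hR0 : R ≠ 0) (hR : ∀ a ∈ R, a < x) (hxy : x < y) :
    invSubSum R y < invSubSum R x :=
  Multiset.sum_lt_sum_of_nonempty hR0 fun a ha => by
    have := hR a ha
    gcongr

theorem one_div_sub_le_invSubSum (hR : ∀ a ∈ R, a < x) {a : ℝ} (ha : a ∈ R) :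
    1 / (x - a) ≤ invSubSum R x :=
  Multiset.single_le_sum (fun _ hz => by
      obtain ⟨b, hb, rfl⟩ := Multiset.mem_map.mp hz
      exact one_div_nonneg.mpr (sub_nonneg.mpr (hR b hb).le))
    _ (Multiset.mem_map_of_mem _ ha)

theorem invSubSqSum_nonneg (R : Multiset ℝ) (x : ℝ) : 0 ≤ invSubSqSum R x :=
  Multiset.sum_nonneg fun _ hz => by
    obtain ⟨b, -, rfl⟩ := Multiset.mem_map.mp hz
    positivity

theorem sub_mul_invSubSqSum_le (hR : ∀ a ∈ R, a < x) (hxy : x ≤ y) :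
    (y - x) * invSubSqSum R y ≤ invSubSum R x - invSubSum R y := by
  rw [invSubSqSum, invSubSum, invSubSum, ← Multiset.sum_map_mul_left, ← Multiset.sum_map_sub]
  refine Multiset.sum_map_le_sum_map _ _ fun a ha => ?_
  have hxa : 0 < x - a := sub_pos.mpr (hR a ha)
  have hya : 0 < y - a := by linarith
  rw [div_sub_div _ _ hxa.ne' hya.ne', mul_one_div, div_le_div_iff₀ (by positivity) (by positivity)]
  nlinarith [mul_nonneg (sub_nonneg.mpr hxy) (mul_nonneg (sub_nonneg.mpr hxy) hya.le)]

theorem invSubSqSum_le_of_invSubSum_le {b φ : ℝ} (hR : ∀ a ∈ R, a < b) (hb : invSubSum R b ≤ φ)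
    (hφ1 : φ < 1) (hy : b + 1 / (1 - φ) ≤ y) :
    invSubSqSum R y ≤ (1 - φ) * (φ - invSubSum R y) := by
  have hφ : 0 < 1 - φ := sub_pos.mpr hφ1
  have hδ : 1 ≤ (1 - φ) * (y - b) := by
    rw [← div_le_iff₀' hφ]
    linarith
  have hconv := sub_mul_invSubSqSum_le hR (by linarith [one_div_pos.mpr hφ] : b ≤ y)
  nlinarith [invSubSqSum_nonneg R y]

end AboveRoots

theorem sub_sq_add_div_one_sub_le {φ s t : ℝ} (hφ1 : φ < 1) (hs : s ≤ φ)
    (ht : t ≤ (1 - φ) * (φ - s)) : (s - s ^ 2 + t) / (1 - s) ≤ φ := by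
  rw [div_le_iff₀ (by linarith)]
  nlinarith

theorem sub_sq_add_div_one_sub_lt {φ s t : ℝ} (hφ1 : φ < 1) (hs : s < φ)
    (ht : t ≤ (1 - φ) * (φ - s)) : (s - s ^ 2 + t) / (1 - s) < φ := by
  rw [div_lt_iff₀ (by linarith)]
  nlinarith

theorem exists_mem_Icc_upperBarrier_eq {p : ℝ[X]} {φ x y : ℝ} (hxy : x ≤ y)
    (hp : ∀ z ∈ Set.Icc x y, p.eval z ≠ 0) (hx : φ ≤ upperBarrier p x)
    (hy : upperBarrier p y ≤ φ) : ∃ z ∈ Set.Icc x y, upperBarrier p z = φ :=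
  intermediate_value_Icc' hxy
    ((derivative p).continuous.continuousOn.div p.continuous.continuousOn hp) ⟨hy, hx⟩

theorem eval_ne_zero_of_roots_lt {f : ℝ[X]} {x : ℝ} (hf0 : f ≠ 0) (hx : ∀ a ∈ f.roots, a < x) :
    f.eval x ≠ 0 :=
  fun h => lt_irrefl x (hx x ((mem_roots hf0).mpr h))

namespace Polynomial.Splits

variable {f : ℝ[X]} {φ b x y : ℝ}

theorem upperBarrier_eq (hf : f.Splits) (hx : f.eval x ≠ 0) :
    upperBarrier f x = invSubSum f.roots x :=
  hf.eval_derivative_div_eval_of_ne_zero hx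

theorem eval_sub_derivative (hf : f.Splits) (hx : f.eval x ≠ 0) :
    (f - derivative f).eval x = f.eval x * (1 - invSubSum f.roots x) := by
  rw [eval_sub, hf.eval_derivative_eq_eval_mul_sum hx, invSubSum]
  ring

theorem upperBarrier_sub_derivative (hf : f.Splits) (hx : f.eval x ≠ 0) :
    upperBarrier (f - derivative f) x =
      (invSubSum f.roots x - invSubSum f.roots x ^ 2 + invSubSqSum f.roots x) /
        (1 - invSubSum f.roots x) := by
  have hnum : (derivative (f - derivative f)).eval x = f.eval x *
      (invSubSum f.roots x - invSubSum f.roots x ^ 2 + invSubSqSum f.roots x) := by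
    rw [derivative_sub, eval_sub, hf.eval_derivative_derivative_eq_eval_mul hx,
      hf.eval_derivative_eq_eval_mul_sum hx, invSubSum]
    ring
  rw [upperBarrier, hnum, hf.eval_sub_derivative hx, mul_div_mul_left _ _ hx]

theorem eval_sub_derivative_ne_zero (hf : f.Splits) (hf0 : f ≠ 0) (hφ1 : φ < 1)
    (hb : ∀ a ∈ f.roots, a < b) (hΦ : upperBarrier f b ≤ φ) (hy : b ≤ y) :
    (f - derivative f).eval y ≠ 0 := by
  have hy_roots : ∀ a ∈ f.roots, a < y := fun a ha => (hb a ha).trans_le hy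
  have hs : invSubSum f.roots y ≤ φ := (invSubSum_le_invSubSum hb hy).trans
    (hf.upperBarrier_eq (eval_ne_zero_of_roots_lt hf0 hb) ▸ hΦ)
  rw [hf.eval_sub_derivative (eval_ne_zero_of_roots_lt hf0 hy_roots)]
  exact mul_ne_zero (eval_ne_zero_of_roots_lt hf0 hy_roots) (by linarith)

theorem upperBarrier_sub_derivative_le (hf : f.Splits) (hf0 : f ≠ 0) (hφ1 : φ < 1)
    (hb : ∀ a ∈ f.roots, a < b) (hΦ : upperBarrier f b ≤ φ) (hy : b + 1 / (1 - φ) ≤ y) :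
    upperBarrier (f - derivative f) y ≤ φ := by
  have hby : b ≤ y := by linarith [one_div_pos.mpr (sub_pos.mpr hφ1)]
  have hy_roots : ∀ a ∈ f.roots, a < y := fun a ha => (hb a ha).trans_le hby
  have hbs : invSubSum f.roots b ≤ φ := hf.upperBarrier_eq (eval_ne_zero_of_roots_lt hf0 hb) ▸ hΦ
  have hs : invSubSum f.roots y ≤ φ := (invSubSum_le_invSubSum hb hby).trans hbs
  rw [hf.upperBarrier_sub_derivative (eval_ne_zero_of_roots_lt hf0 hy_roots)]
  exact sub_sq_add_div_one_sub_le hφ1 hs (invSubSqSum_le_of_invSubSum_le hb hbs hφ1 hy)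

theorem upperBarrier_sub_derivative_lt (hf : f.Splits) (hR : f.roots ≠ 0) (hφ1 : φ < 1)
    (hb : ∀ a ∈ f.roots, a < b) (hΦ : upperBarrier f b ≤ φ) (hy : b + 1 / (1 - φ) < y) :
    upperBarrier (f - derivative f) y < φ := by
  have hf0 : f ≠ 0 := fun h => hR (h ▸ roots_zero)
  have hby : b < y := by linarith [one_div_pos.mpr (sub_pos.mpr hφ1)]
  have hy_roots : ∀ a ∈ f.roots, a < y := fun a ha => (hb a ha).trans hby
  have hbs : invSubSum f.roots b ≤ φ := hf.upperBarrier_eq (eval_ne_zero_of_roots_lt hf0 hb) ▸ hΦ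
  have hs : invSubSum f.roots y < φ := (invSubSum_lt_invSubSum hR hb hby).trans_le hbs
  rw [hf.upperBarrier_sub_derivative (eval_ne_zero_of_roots_lt hf0 hy_roots)]
  exact sub_sq_add_div_one_sub_lt hφ1 hs (invSubSqSum_le_of_invSubSum_le hb hbs hφ1 hy.le)

theorem le_upperBarrier_sub_derivative (hf : f.Splits) (hf0 : f ≠ 0) (hφ1 : φ < 1)
    (hx : ∀ a ∈ f.roots, a < x) (hΦ : upperBarrier f x = φ) :
    φ ≤ upperBarrier (f - derivative f) x := by
  have hs : invSubSum f.roots x = φ := hf.upperBarrier_eq (eval_ne_zero_of_roots_lt hf0 hx) ▸ hΦ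
  rw [hf.upperBarrier_sub_derivative (eval_ne_zero_of_roots_lt hf0 hx), hs,
    le_div_iff₀ (by linarith)]
  nlinarith [invSubSqSum_nonneg f.roots x]

theorem exists_upperBarrier_eq (hf : f.Splits) (hR : f.roots ≠ 0) (hφ0 : 0 < φ)
    (hb : ∀ a ∈ f.roots, a < b) (hΦ : upperBarrier f b ≤ φ) :
    ∃ t ≤ b, (∀ a ∈ f.roots, a < t) ∧ upperBarrier f t = φ := by
  have hf0 : f ≠ 0 := fun h => hR (h ▸ roots_zero)
  obtain ⟨l, hl, hmax⟩ := Multiset.exists_max_image id hR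
  set y₀ := min b (l + 1 / φ)
  have hly₀ : l < y₀ := lt_min (hb l hl) (by linarith [one_div_pos.mpr hφ0])
  have habove : ∀ z, y₀ ≤ z → ∀ a ∈ f.roots, a < z :=
    fun z hz a ha => (hmax a ha).trans_lt (hly₀.trans_le hz)
  have hy₀ : φ ≤ upperBarrier f y₀ := by
    rw [hf.upperBarrier_eq (eval_ne_zero_of_roots_lt hf0 (habove y₀ le_rfl))]
    calc φ = 1 / (1 / φ) := (one_div_one_div φ).symm
      _ ≤ 1 / (y₀ - l) := one_div_le_one_div_of_le (sub_pos.mpr hly₀)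
          (by linarith [min_le_right b (l + 1 / φ)])
      _ ≤ invSubSum f.roots y₀ := one_div_sub_le_invSubSum (habove y₀ le_rfl) hl
  obtain ⟨t, ⟨hy₀t, htb⟩, ht⟩ := exists_mem_Icc_upperBarrier_eq (min_le_left _ _)
    (fun z hz => eval_ne_zero_of_roots_lt hf0 (habove z hz.1)) hy₀ hΦ
  exact ⟨t, htb, habove t hy₀t, ht⟩

theorem isGreatest_setOf_upperBarrier_eq (hf : f.Splits) (hR : f.roots ≠ 0)
    (hx : ∀ a ∈ f.roots, a < x) (hΦ : upperBarrier f x = φ) :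
    IsGreatest {z | upperBarrier f z = φ} x := by
  have hf0 : f ≠ 0 := fun h => hR (h ▸ roots_zero)
  refine ⟨hΦ, fun z hz => le_of_not_gt fun hxz => ?_⟩
  have hz_roots : ∀ a ∈ f.roots, a < z := fun a ha => (hx a ha).trans hxz
  have hlt := invSubSum_lt_invSubSum hR hx hxz
  rw [← hf.upperBarrier_eq (eval_ne_zero_of_roots_lt hf0 hz_roots),
    ← hf.upperBarrier_eq (eval_ne_zero_of_roots_lt hf0 hx), hΦ] at hlt
  exact hlt.ne hz

theorem smax_sub_derivative_le (hf : f.Splits) (hR : f.roots ≠ 0) (hφ0 : 0 < φ) (hφ1 : φ < 1)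
    (hb : ∀ a ∈ f.roots, a < b) (hΦ : upperBarrier f b ≤ φ) :
    smax φ (f - derivative f) ≤ smax φ f + 1 / (1 - φ) := by
  have hf0 : f ≠ 0 := fun h => hR (h ▸ roots_zero)
  obtain ⟨t, -, ht, htφ⟩ := hf.exists_upperBarrier_eq hR hφ0 hb hΦ
  obtain ⟨u, -, hu⟩ := exists_mem_Icc_upperBarrier_eq
    (by linarith [one_div_pos.mpr (sub_pos.mpr hφ1)] : t ≤ t + 1 / (1 - φ))
    (fun z hz => hf.eval_sub_derivative_ne_zero hf0 hφ1 ht htφ.le hz.1)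
    (hf.le_upperBarrier_sub_derivative hf0 hφ1 ht htφ)
    (hf.upperBarrier_sub_derivative_le hf0 hφ1 ht htφ.le le_rfl)
  rw [smax, smax, (hf.isGreatest_setOf_upperBarrier_eq hR ht htφ).csSup_eq]
  exact csSup_le ⟨u, hu⟩ fun z hz => le_of_not_gt fun hz' =>
    (hf.upperBarrier_sub_derivative_lt hR hφ1 ht htφ.le hz').ne hz

end Polynomial.Splits

/-- **The upper barrier shift lemma.**
Let `f` be real-rooted of positive degree, `0 < φ < 1`, and let `b` be
strictly above all roots of `f` with `Φ^f(b) ≤ φ`.  Then `b + 1/(1-φ)` is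
strictly above all roots of `(1-D)f = f - f'`,
`Φ^{(1-D)f}(b + 1/(1-φ)) ≤ φ`, and consequently
`smax_φ((1-D)f) ≤ smax_φ(f) + 1/(1-φ)`. -/
theorem upper_barrier_shift
    (f : Polynomial ℝ) (hf : RealRooted f) (hdeg : 0 < f.natDegree)
    (φ : ℝ) (hφ0 : 0 < φ) (hφ1 : φ < 1)
    (b : ℝ) (hb : ∀ x ∈ f.roots, x < b) (hΦ : upperBarrier f b ≤ φ) :
    (∀ x ∈ (f - Polynomial.derivative f).roots, x < b + 1 / (1 - φ)) ∧
    upperBarrier (f - Polynomial.derivative f) (b + 1 / (1 - φ)) ≤ φ ∧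
    smax φ (f - Polynomial.derivative f) ≤ smax φ f + 1 / (1 - φ) := by
  have hf : f.Splits := hf
  have hf0 : f ≠ 0 := ne_zero_of_natDegree_gt hdeg
  have hR : f.roots ≠ 0 := by
    rw [← Multiset.card_pos, ← hf.natDegree_eq_card_roots]
    exact hdeg
  refine ⟨fun x hx => ?_, hf.upperBarrier_sub_derivative_le hf0 hφ1 hb hΦ le_rfl,
    hf.smax_sub_derivative_le hR hφ0 hφ1 hb hΦ⟩
  by_contra! hbx
  have hδ : 0 < 1 / (1 - φ) := one_div_pos.mpr (sub_pos.mpr hφ1)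
  exact hf.eval_sub_derivative_ne_zero hf0 hφ1 hb hΦ (by linarith) (mem_roots'.mp hx).2
end

section
/- For integers 1 ≤ k ≤ n, the largest root of the polynomial (1−D)^n x^k is at most n(1 + √(k/n))² = (√n + √k)². -/
open Polynomial

/-- The operator `(1 - D) f = f - f'` on univariate real polynomials. -/
noncomputable def oneSubD (f : Polynomial ℝ) : Polynomial ℝ :=
  f - Polynomial.derivative f

namespace LaguerreAux

lemma oneSubD_sub (f g : ℝ[X]) : oneSubD (f - g) = oneSubD f - oneSubD g := by
  simp only [oneSubD, derivative_sub]; ring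

lemma oneSubD_C_mul (a : ℝ) (f : ℝ[X]) : oneSubD (C a * f) = C a * oneSubD f := by
  simp only [oneSubD, derivative_C_mul, mul_sub]

lemma oneSubD_X_mul (f : ℝ[X]) : oneSubD (X * f) = X * oneSubD f - f := by
  simp only [oneSubD, derivative_mul, derivative_X, one_mul]; ring

lemma deriv_oneSubD (f : ℝ[X]) : derivative (oneSubD f) = oneSubD (derivative f) := by
  simp only [oneSubD, derivative_sub]

lemma deriv_iter (t : ℕ) (f : ℝ[X]) :
    derivative (oneSubD^[t] f) = oneSubD^[t] (derivative f) := by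
  induction t generalizing f with
  | zero => simp
  | succ t ih =>
      rw [Function.iterate_succ_apply, ih, deriv_oneSubD, ← Function.iterate_succ_apply]

lemma iter_C_mul (t : ℕ) (a : ℝ) (f : ℝ[X]) :
    oneSubD^[t] (C a * f) = C a * oneSubD^[t] f := by
  induction t generalizing f with
  | zero => simp
  | succ t ih => rw [Function.iterate_succ_apply, oneSubD_C_mul, ih,
      ← Function.iterate_succ_apply]

lemma iter_one (t : ℕ) : oneSubD^[t] (1 : ℝ[X]) = 1 := by
  induction t with
  | zero => rfl
  | succ t ih =>
      rw [Function.iterate_succ_apply', ih]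
      simp [oneSubD]

lemma iter_X (t : ℕ) : oneSubD^[t] (X : ℝ[X]) = X - C (t : ℝ) := by
  induction t with
  | zero => simp
  | succ t ih =>
      rw [Function.iterate_succ_apply', ih, oneSubD_sub]
      simp only [oneSubD, derivative_X, derivative_C]
      push_cast
      simp only [map_add, map_one]
      ring

lemma iter_X_mul (t : ℕ) (f : ℝ[X]) :
    oneSubD^[t+1] (X * f) = X * oneSubD^[t+1] f - C ((t : ℝ) + 1) * oneSubD^[t] f := by
  induction t with
  | zero =>
      simp only [zero_add, Function.iterate_one, Function.iterate_zero]
      rw [oneSubD_X_mul]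
      norm_num
  | succ t ih =>
      rw [Function.iterate_succ_apply' _ (t+1), ih, oneSubD_sub, oneSubD_C_mul,
        oneSubD_X_mul, ← Function.iterate_succ_apply' oneSubD t,
        ← Function.iterate_succ_apply' oneSubD (t+1)]
      push_cast
      simp only [map_add, map_one]
      ring

/-- Three-term recurrence for `A_m = (1-D)^[s] X^m` family (s shifts with m). -/
lemma key_rec (s m : ℕ) :
    oneSubD^[s+2] ((X : ℝ[X])^(m+2)) =
      (X - C ((s : ℝ) + (m : ℝ) + 3)) * oneSubD^[s+1] (X^(m+1))
        - C (((m : ℝ) + 1) * ((s : ℝ) + 1)) * oneSubD^[s] (X^m) := by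
  have h0 : oneSubD^[s+1] ((X : ℝ[X])^m) = oneSubD (oneSubD^[s] (X^m)) :=
    Function.iterate_succ_apply' _ _ _
  have hxp1 : (X : ℝ[X])^(m+1) = X * X^m := by ring
  have hE1 : oneSubD^[s+1] ((X : ℝ[X])^(m+1))
      = X * oneSubD (oneSubD^[s] (X^m)) - C ((s : ℝ) + 1) * oneSubD^[s] (X^m) := by
    rw [hxp1, iter_X_mul s, h0]
  have hd : derivative (oneSubD^[s+1] ((X : ℝ[X])^(m+1)))
      = C ((m : ℝ) + 1) * oneSubD (oneSubD^[s] (X^m)) := by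
    rw [deriv_iter, derivative_X_pow]
    simp only [Nat.add_sub_cancel, Nat.cast_add, Nat.cast_one]
    rw [iter_C_mul, h0]
  have hxp2 : (X : ℝ[X])^(m+2) = X * X^(m+1) := by ring
  have hcast : ((s + 1 : ℕ) : ℝ) + 1 = (s : ℝ) + 2 := by push_cast; ring
  have hmain : oneSubD^[s+2] ((X : ℝ[X])^(m+2))
      = X * (oneSubD^[s+1] (X^(m+1)) - derivative (oneSubD^[s+1] (X^(m+1))))
        - C ((s : ℝ) + 2) * oneSubD^[s+1] (X^(m+1)) := by
    rw [hxp2, iter_X_mul (s+1), hcast, Function.iterate_succ_apply' oneSubD (s+1)]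
    rfl
  rw [hmain, hd, hE1]
  simp only [map_add, map_mul, map_one, map_ofNat]
  ring

end LaguerreAux

/-- **Upper bound for the largest root of `(1-D)ⁿ x^k` (associated Laguerre
polynomials).**  For `1 ≤ k ≤ n`, every root of `(1-D)ⁿ x^k` is at most
`n(1 + √(k/n))² = (√n + √k)²`. -/
theorem laguerre_largest_root_bound (n k : ℕ) (hk1 : 1 ≤ k) (hkn : k ≤ n) :
    ∀ x ∈ (oneSubD^[n] (Polynomial.X ^ k)).roots,
      x ≤ (Real.sqrt n + Real.sqrt k) ^ 2 := by
  intro x hx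
  by_contra hgt
  push_neg at hgt
  have hroot : (oneSubD^[n] ((X : ℝ[X]) ^ k)).eval x = 0 :=
    Polynomial.isRoot_of_mem_roots hx
  -- setup
  set α : ℕ := n - k with hαdef
  have hα : (α : ℝ) = (n : ℝ) - (k : ℝ) := by
    rw [hαdef, Nat.cast_sub hkn]
  have hk1' : (1 : ℝ) ≤ (k : ℝ) := by exact_mod_cast hk1
  have hn1' : (1 : ℝ) ≤ (n : ℝ) := by
    have : 1 ≤ n := le_trans hk1 hkn
    exact_mod_cast this
  set c : ℝ := Real.sqrt ((k : ℝ) * (n : ℝ)) with hcdef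
  have hc0 : 0 ≤ c := Real.sqrt_nonneg _
  have hcpos : 0 < c := Real.sqrt_pos.mpr (by nlinarith)
  have hc2 : c * c = (k : ℝ) * (n : ℝ) :=
    Real.mul_self_sqrt (by nlinarith)
  have hxB : (n : ℝ) + (k : ℝ) + 2 * c < x := by
    have hsq : (Real.sqrt n + Real.sqrt k) ^ 2 = (n : ℝ) + (k : ℝ) + 2 * c := by
      rw [add_sq, Real.sq_sqrt (by positivity), Real.sq_sqrt (by positivity)]
      have : Real.sqrt (n : ℝ) * Real.sqrt (k : ℝ) = c := by
        rw [hcdef, ← Real.sqrt_mul (by positivity), mul_comm]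
      linear_combination 2 * this
    linarith [hgt, hsq.symm.le]
  -- the evaluated sequence
  set E : ℕ → ℝ := fun j => (oneSubD^[j + α] ((X : ℝ[X])^j)).eval x with hEdef
  have hE0 : E 0 = 1 := by
    simp only [hEdef, pow_zero, Nat.zero_add, LaguerreAux.iter_one, eval_one]
  have hE1 : E 1 = x - (1 + (α : ℝ)) := by
    simp only [hEdef, pow_one, LaguerreAux.iter_X, eval_sub, eval_X, eval_C]
    push_cast
    ring
  have hrec : ∀ j : ℕ, E (j+2)
      = (x - (2*(j : ℝ) + 3 + (α : ℝ))) * E (j+1)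
        - (((j : ℝ)+1) * ((j : ℝ)+1+(α : ℝ))) * E j := by
    intro j
    have h := LaguerreAux.key_rec (j + α) j
    have h1 : j + α + 2 = (j+2) + α := by omega
    have h2 : j + α + 1 = (j+1) + α := by omega
    rw [h1, h2] at h
    have h3 := congrArg (eval x) h
    simp only [eval_mul, eval_sub, eval_X, eval_C] at h3
    simp only [hEdef]
    rw [h3]
    push_cast
    ring
  have hEk : E k = 0 := by
    have hkα : k + α = n := by omega
    simp only [hEdef, hkα]
    exact hroot
  -- main chain induction
  have key : ∀ j : ℕ, j + 1 ≤ k → 0 < E j ∧ c * E j ≤ E (j+1) := by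
    intro j
    induction j with
    | zero =>
        intro _
        constructor
        · rw [hE0]; norm_num
        · rw [hE0, hE1, hα]
          linarith
    | succ j ih =>
        intro hj2
        obtain ⟨hEjpos, hstep⟩ := ih (by omega)
        have hE1pos : 0 < E (j+1) := lt_of_lt_of_le (mul_pos hcpos hEjpos) hstep
        refine ⟨hE1pos, ?_⟩
        have hj2' : j + 1 + 1 = j + 2 := by omega
        rw [hj2', hrec j]
        have hjk : (j : ℝ) + 2 ≤ (k : ℝ) := by exact_mod_cast hj2
        have hb : ((j : ℝ)+1) * ((j : ℝ)+1+(α : ℝ)) ≤ c * c := by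
          rw [hc2, hα]
          nlinarith
        have ha : 2 * c + 1 ≤ x - (2*(j : ℝ) + 3 + (α : ℝ)) := by
          rw [hα]
          linarith
        nlinarith [mul_le_mul_of_nonneg_left hstep hc0,
          mul_le_mul_of_nonneg_right ha (le_of_lt hE1pos),
          mul_le_mul_of_nonneg_right hb (le_of_lt hEjpos)]
  obtain ⟨j, rfl⟩ : ∃ j, k = j + 1 := ⟨k - 1, by omega⟩
  obtain ⟨hpos, hstep⟩ := key j (le_refl _)
  rw [hEk] at hstep
  nlinarith [mul_pos hcpos hpos]
end

section
/- Let A_1, …, A_m be Hermitian positive semidefinite d×d complex matrices and let f(z_1, …, z_m) = det(∑_{i=1}^m z_i A_i), a polynomial with real coefficients in z_1, …, z_m. Then either f is identically zero, or f is real stable: f(z_1, …, z_m) ≠ 0 whenever Im(z_i) > 0 for all i. -/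
open Matrix
open scoped ComplexOrder

/-- The multivariate polynomial `det(∑ i, z i • A i)` in the variables
`z 0, …, z (m-1)`. -/
noncomputable def detSumPoly {d m : ℕ}
    (A : Fin m → Matrix (Fin d) (Fin d) ℂ) : MvPolynomial (Fin m) ℂ :=
  (∑ i : Fin m, (MvPolynomial.X i : MvPolynomial (Fin m) ℂ) •
    ((A i).map MvPolynomial.C :
      Matrix (Fin d) (Fin d) (MvPolynomial (Fin m) ℂ))).det

/-!
If the `Aᵢ` share a nonzero kernel vector, `det (∑ zᵢ Aᵢ)` vanishes for every `z`. Otherwise,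
suppose `(∑ zᵢ Aᵢ) v = 0` with `v ≠ 0` and all `Im zᵢ > 0`. Since each `v* Aᵢ v` is a nonnegative
real, `0 = Im (v* (∑ zᵢ Aᵢ) v) = ∑ Im zᵢ · v* Aᵢ v` forces `v* Aᵢ v = 0`, hence `Aᵢ v = 0` by
positive semidefiniteness, for every `i`: a common kernel vector after all.
-/

lemma eval_detSumPoly {d m : ℕ} (A : Fin m → Matrix (Fin d) (Fin d) ℂ) (z : Fin m → ℂ) :
    MvPolynomial.eval z (detSumPoly A) = (∑ i, z i • A i).det := by
  rw [detSumPoly, RingHom.map_det]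
  congr 1
  ext j k
  simp [Matrix.sum_apply]

lemma detSumPoly_eq_zero_of_mulVec_eq_zero {d m : ℕ} {A : Fin m → Matrix (Fin d) (Fin d) ℂ}
    {v : Fin d → ℂ} (hv : v ≠ 0) (hAv : ∀ i, A i *ᵥ v = 0) : detSumPoly A = 0 := by
  refine MvPolynomial.funext fun z => ?_
  rw [eval_detSumPoly, map_zero, ← exists_mulVec_eq_zero_iff]
  exact ⟨v, hv, by simp [sum_mulVec, smul_mulVec, hAv]⟩

lemma Complex.im_mul_of_nonneg (z : ℂ) {c : ℂ} (hc : 0 ≤ c) :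
    (z * c).im = z.im * c.re := by
  rw [Complex.mul_im, ← (Complex.nonneg_iff.mp hc).2, mul_zero, zero_add]

namespace Matrix

variable {ι n : Type*} [Fintype ι] [Fintype n]

lemma star_dotProduct_sum_smul_mulVec (A : ι → Matrix n n ℂ) (z : ι → ℂ) (v : n → ℂ) :
    star v ⬝ᵥ (∑ i, z i • A i) *ᵥ v = ∑ i, z i * (star v ⬝ᵥ A i *ᵥ v) := by
  simp only [sum_mulVec, smul_mulVec, dotProduct_sum, dotProduct_smul, smul_eq_mul]

lemma PosSemidef.mulVec_eq_zero_of_sum_smul_mulVec_eq_zero {A : ι → Matrix n n ℂ}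
    (hA : ∀ i, (A i).PosSemidef) {z : ι → ℂ} (hz : ∀ i, 0 < (z i).im) {v : n → ℂ}
    (hv : (∑ i, z i • A i) *ᵥ v = 0) (i : ι) : A i *ᵥ v = 0 := by
  have hc : ∀ i, 0 ≤ star v ⬝ᵥ A i *ᵥ v := fun i => (hA i).dotProduct_mulVec_nonneg v
  have him : ∑ i, (z i).im * (star v ⬝ᵥ A i *ᵥ v).re = 0 := by
    have h := congrArg Complex.im (star_dotProduct_sum_smul_mulVec A z v)
    rw [hv, dotProduct_zero, Complex.zero_im, Complex.im_sum] at h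
    simpa only [Complex.im_mul_of_nonneg _ (hc _)] using h.symm
  have hre : (star v ⬝ᵥ A i *ᵥ v).re = 0 := by
    have := (Finset.sum_eq_zero_iff_of_nonneg fun j _ =>
      mul_nonneg (hz j).le (Complex.nonneg_iff.mp (hc j)).1).mp him i (Finset.mem_univ i)
    exact (mul_eq_zero.mp this).resolve_left (hz i).ne'
  refine ((hA i).dotProduct_mulVec_zero_iff v).mp (Complex.ext hre ?_)
  exact (Complex.nonneg_iff.mp (hc i)).2.symm

end Matrix

/-- **Real stability of determinantal polynomials (Borcea–Brändén).**
If `A₁, …, A_m` are Hermitian positive semidefinite `d × d` complex matrices,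
then `f(z₁,…,z_m) = det(∑ᵢ zᵢ Aᵢ)` is either identically zero or real
stable: it does not vanish when every coordinate has strictly positive
imaginary part. -/
theorem det_sum_psd_real_stable
    {d m : ℕ} (A : Fin m → Matrix (Fin d) (Fin d) ℂ)
    (hA : ∀ i, (A i).PosSemidef) :
    detSumPoly A = 0 ∨
    ∀ z : Fin m → ℂ, (∀ i, 0 < (z i).im) →
      MvPolynomial.eval z (detSumPoly A) ≠ 0 := by
  by_cases hker : ∃ v ≠ 0, ∀ i, A i *ᵥ v = 0
  · obtain ⟨v, hv, hAv⟩ := hker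
    exact .inl (detSumPoly_eq_zero_of_mulVec_eq_zero hv hAv)
  · refine .inr fun z hz hdet => hker ?_
    rw [eval_detSumPoly, ← exists_mulVec_eq_zero_iff] at hdet
    obtain ⟨v, hv, hzv⟩ := hdet
    exact ⟨v, hv, PosSemidef.mulVec_eq_zero_of_sum_smul_mulVec_eq_zero hA hz hzv⟩
end
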